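/- arXiv:2306.13303 — 5 statements merged into one kernel-verified Lean document; each statement's English description precedes it below -/
import Mathlib

section
/- Let λ ∈ ℂ and let q₁, q₂, q₃, q₄ be real-valued functions integrable on (0,1) with q_j(z) = q_j(1−z) for a.e. z ∈ (0,1) (symmetric potentials on the four edges incident to a vertex v of the square lattice, each edge oriented away from v). For j = 1,…,4 let (S_j, S_j') be the solution of −u'' + q_j u = λu with S_j(0) = 0, S_j'(0) = 1, and assume S_j(1) ≠ 0. Let (u_j, u_j'), j = 1,…,4, be solutions of −u'' + q_j u = λu satisfying the Kirchhoff conditions u₁(0) = u₂(0) = u₃(0) = u₄(0) and u₁'(0) + u₂'(0) + u₃'(0) + u₄'(0) = 0. Then (1/4)·∑_{j=1}^4 u_j(1)/S_j(1) = ( (1/4)·∑_{j=1}^4 S_j'(1)/S_j(1) )·u₁(0); that is, the vertex values satisfy the reduced vertex Schrödinger equation (−Δ_{V,λ} + Q_{V,λ})u = 0 at v. (Lemma 3.1.) -/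
/-!
By the symmetry of `q`, `z ↦ S (1 - z)` is again a solution; it has value `S 1` and derivative
`-S' 1` at `0`, value `0` and derivative `-1` at `1`. Constancy of the Wronskian of `u_j` with it
gives `u_j 1 = u_j 0 * S_j' 1 + u_j' 0 * S_j 1`; divide by `S_j 1`, sum over `j` and use the
Kirchhoff conditions.

The Wronskian is constant by integration by parts for primitives of integrable functions
(Fubini on a triangle). This needs `u'` and `(q - λ) u` to be integrable, which the definition
does not say outright, since a non-integrable integrand has integral `0`: a Gronwall estimate shows
that the supremum of the points up to which `u'` is integrable is attained, and it cannot lie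
below `1`.
-/

open MeasureTheory

/-- Carathéodory/H² formulation: the pair `(u, u')` solves `−u'' + q·u = λ·u` on `[0,1]`. -/
def SchrodingerSol (q : ℝ → ℝ) (lam : ℂ) (u u' : ℝ → ℂ) : Prop :=
  ∀ z ∈ Set.Icc (0 : ℝ) 1,
    (u z = u 0 + ∫ t in (0 : ℝ)..z, u' t) ∧
    (u' z = u' 0 + ∫ t in (0 : ℝ)..z, ((q t : ℂ) - lam) * u t)

open Set

section IntervalIntegral

variable {E : Type*} [NormedAddCommGroup E] {a b : ℝ}

theorem IntervalIntegrable.mono_Icc {f : ℝ → E} {μ : Measure ℝ}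
    (hf : IntervalIntegrable f μ a b) {y z : ℝ} (hy : y ∈ Icc a b) (hz : z ∈ Icc a b) :
    IntervalIntegrable f μ y z :=
  hf.mono_set (uIcc_subset_uIcc (Icc_subset_uIcc hy) (Icc_subset_uIcc hz))

theorem IntervalIntegrable.of_continuousOn_Ico_of_bound {f : ℝ → E} {M : ℝ} (hab : a ≤ b)
    (hf : ContinuousOn f (Ico a b)) (hM : ∀ x ∈ Ico a b, ‖f x‖ ≤ M) :
    IntervalIntegrable f volume a b := by
  rw [intervalIntegrable_iff_integrableOn_Ico_of_le hab]
  exact IntegrableOn.of_bound measure_Ico_lt_top (hf.aestronglyMeasurable measurableSet_Ico) M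
    ((ae_restrict_iff' measurableSet_Ico).2 (.of_forall hM))

theorem continuousOn_Ico_of_forall_continuousOn_Icc {X : Type*} [TopologicalSpace X] {f : ℝ → X}
    (hf : ∀ z ∈ Ico a b, ContinuousOn f (Icc a z)) : ContinuousOn f (Ico a b) := by
  refine continuousOn_of_locally_continuousOn fun x hx => ?_
  obtain ⟨z, hxz, hzb⟩ := exists_between hx.2
  exact ⟨Iio z, isOpen_Iio, hxz,
    (hf z ⟨hx.1.trans hxz.le, hzb⟩).mono fun t ht => ⟨ht.1.1, ht.2.le⟩⟩

variable [NormedSpace ℝ E] {F f : ℝ → E}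

theorem continuousOn_of_eq_add_integral (hab : a ≤ b) (hf : IntervalIntegrable f volume a b)
    (hF : ∀ z ∈ Icc a b, F z = F a + ∫ t in a..z, f t) : ContinuousOn F (Icc a b) := by
  have hprim := intervalIntegral.continuousOn_primitive_interval' hf left_mem_uIcc
  rw [uIcc_of_le hab] at hprim
  exact (continuousOn_const.add hprim).congr hF

theorem eq_add_integral_of_forall_eq_add_integral (hf : IntervalIntegrable f volume a b)
    (hF : ∀ z ∈ Icc a b, F z = F a + ∫ t in a..z, f t) {y z : ℝ} (hy : y ∈ Icc a b)
    (hz : z ∈ Icc a b) : F z = F y + ∫ t in y..z, f t := by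
  have hab : a ≤ b := hy.1.trans hy.2
  rw [hF z hz, hF y hy, ← intervalIntegral.integral_interval_sub_left
    (hf.mono_Icc (left_mem_Icc.2 hab) hz) (hf.mono_Icc (left_mem_Icc.2 hab) hy)]
  abel

end IntervalIntegral

section Gronwall

variable {h f : ℝ → ℝ} {a b : ℝ}

theorem IntervalIntegrable.exists_pos_forall_integral_lt (hh : IntervalIntegrable h volume a b)
    (hab : a ≤ b) {ε : ℝ} (hε : 0 < ε) :
    ∃ δ > 0, ∀ y ∈ Icc a b, ∀ z ∈ Icc a b, y ≤ z → z - y < δ →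
      ∫ t in y..z, h t < ε := by
  have hprim := intervalIntegral.continuousOn_primitive_interval' hh left_mem_uIcc
  rw [uIcc_of_le hab] at hprim
  obtain ⟨δ, hδ, hclose⟩ := Metric.uniformContinuousOn_iff.1
    (isCompact_Icc.uniformContinuousOn_of_continuous hprim) ε hε
  refine ⟨δ, hδ, fun y hy z hz hyz hzy => ?_⟩
  have hdist := hclose z hz y hy (by rwa [Real.dist_eq, abs_of_nonneg (sub_nonneg.2 hyz)])
  rw [Real.dist_eq, intervalIntegral.integral_interval_sub_left
    (hh.mono_Icc (left_mem_Icc.2 hab) hz) (hh.mono_Icc (left_mem_Icc.2 hab) hy)] at hdist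
  exact (le_abs_self _).trans_lt hdist

/-- Evaluating the integral inequality at a maximiser `ζ` of `f` on `[y, z]` gives
`f ζ ≤ f y + f ζ / 2`. -/
theorem le_two_mul_of_le_add_integral (hh : IntervalIntegrable h volume a b)
    (hh0 : ∀ t, 0 ≤ h t) (hf : ContinuousOn f (Ico a b)) (hf0 : ∀ z ∈ Ico a b, 0 ≤ f z)
    (hle : ∀ y z, a ≤ y → y ≤ z → z < b → f z ≤ f y + ∫ t in y..z, h t * f t)
    {y z : ℝ} (hay : a ≤ y) (hyz : y ≤ z) (hzb : z < b)
    (hmass : ∫ t in y..z, h t ≤ 1 / 2) : f z ≤ 2 * f y := by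
  have hsub : Icc y z ⊆ Ico a b := Icc_subset_Ico hay hzb
  obtain ⟨ζ, hζ, hmax⟩ := isCompact_Icc.exists_isMaxOn (nonempty_Icc.2 hyz) (hf.mono hsub)
  have hab : Icc y z ⊆ Icc a b := hsub.trans Ico_subset_Icc_self
  have hhyζ : IntervalIntegrable h volume y ζ :=
    hh.mono_Icc (hab (left_mem_Icc.2 hyz)) (hab hζ)
  have hfζ : 0 ≤ f ζ := hf0 ζ (hsub hζ)
  have hmassζ : ∫ t in y..ζ, h t ≤ 1 / 2 :=
    (intervalIntegral.integral_mono_interval le_rfl hζ.1 hζ.2 (.of_forall fun t => hh0 t)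
      (hh.mono_Icc (hab (left_mem_Icc.2 hyz)) (hab (right_mem_Icc.2 hyz)))).trans hmass
  have hbound : ∫ t in y..ζ, h t * f t ≤ (∫ t in y..ζ, h t) * f ζ := by
    rw [← intervalIntegral.integral_mul_const]
    refine intervalIntegral.integral_mono_on hζ.1
      (hhyζ.mul_continuousOn (hf.mono ?_)) (hhyζ.mul_const _) fun t ht =>
        mul_le_mul_of_nonneg_left (hmax ⟨ht.1, ht.2.trans hζ.2⟩) (hh0 t)
    rw [uIcc_of_le hζ.1]
    exact (Icc_subset_Icc_right hζ.2).trans hsub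
  have hζle : f ζ ≤ f y + ∫ t in y..ζ, h t * f t := hle y ζ hay hζ.1 (hζ.2.trans_lt hzb)
  have hzζ : f z ≤ f ζ := hmax (right_mem_Icc.2 hyz)
  linarith [mul_le_mul_of_nonneg_right hmassζ hfζ]

theorem exists_bound_of_le_add_integral (hh : IntervalIntegrable h volume a b)
    (hh0 : ∀ t, 0 ≤ h t) (hf : ContinuousOn f (Ico a b)) (hf0 : ∀ z ∈ Ico a b, 0 ≤ f z)
    (hle : ∀ y z, a ≤ y → y ≤ z → z < b → f z ≤ f y + ∫ t in y..z, h t * f t) :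
    ∃ M, ∀ z ∈ Ico a b, f z ≤ M := by
  rcases le_or_gt b a with hba | hab
  · exact ⟨0, fun z hz => absurd (hz.1.trans_lt hz.2) hba.not_gt⟩
  obtain ⟨δ, hδ, hmass⟩ := hh.exists_pos_forall_integral_lt hab.le (ε := 1 / 2) one_half_pos
  have hfa : 0 ≤ f a := hf0 a (left_mem_Ico.2 hab)
  -- Across each step of length `δ / 2` the mass of `h` is below `1 / 2`, so `f` at most doubles.
  have hstep : ∀ k : ℕ, ∀ z ∈ Ico a b, z ≤ a + k * (δ / 2) → f z ≤ 2 ^ k * f a := by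
    intro k
    induction k with
    | zero =>
      intro z hz hza
      rw [le_antisymm (by simpa using hza) hz.1]
      simp
    | succ k ih =>
      intro z hz hzk
      by_cases hzk' : z ≤ a + k * (δ / 2)
      · exact (ih z hz hzk').trans (by gcongr <;> norm_num)
      · set y := a + k * (δ / 2) with hy
        have hay : a ≤ y := le_add_of_nonneg_right (by positivity)
        have hyz : y ≤ z := (not_le.1 hzk').le
        have hyb : y ∈ Ico a b := ⟨hay, hyz.trans_lt hz.2⟩
        have hdouble := le_two_mul_of_le_add_integral hh hh0 hf hf0 hle hay hyz hz.2
          (hmass y (Ico_subset_Icc_self hyb) z (Ico_subset_Icc_self hz) hyz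
            (by push_cast at hzk; linarith)).le
        calc f z ≤ 2 * f y := hdouble
          _ ≤ 2 * (2 ^ k * f a) := by gcongr; exact ih y hyb le_rfl
          _ = 2 ^ (k + 1) * f a := by ring
  refine ⟨2 ^ ⌈(b - a) / (δ / 2)⌉₊ * f a, fun z hz => hstep _ z hz ?_⟩
  have := Nat.le_ceil ((b - a) / (δ / 2))
  rw [div_le_iff₀ (by positivity)] at this
  linarith [hz.2]

end Gronwall

section IntegrationByParts

variable {f g : ℝ → ℂ} {a b : ℝ}

theorem setIntegral_Iic_restrict_Ioc {x : ℝ} (hx : x ∈ Ioc a b) (f : ℝ → ℂ) :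
    ∫ y in Iic x, f y ∂volume.restrict (Ioc a b) = ∫ y in a..x, f y := by
  rw [Measure.restrict_restrict measurableSet_Iic, inter_comm, Ioc_inter_Iic,
    min_eq_right hx.2, intervalIntegral.integral_of_le hx.1.le]

/-- Fubini on the square `(a, b]²`, split along the diagonal. -/
theorem integral_mul_primitive_add_primitive_mul (hab : a ≤ b)
    (hf : IntervalIntegrable f volume a b) (hg : IntervalIntegrable g volume a b) :
    ∫ x in a..b, (f x * ∫ t in a..x, g t) + (∫ t in a..x, f t) * g x
      = (∫ x in a..b, f x) * ∫ x in a..b, g x := by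
  have hΦ := intervalIntegral.continuousOn_primitive_interval' hf left_mem_uIcc
  have hΓ := intervalIntegral.continuousOn_primitive_interval' hg left_mem_uIcc
  rw [intervalIntegral.integral_add (hf.mul_continuousOn hΓ) (hg.continuousOn_mul hΦ),
    intervalIntegral.integral_of_le hab, intervalIntegral.integral_of_le hab,
    intervalIntegral.integral_of_le hab, intervalIntegral.integral_of_le hab]
  set μ := volume.restrict (Ioc a b)
  have hfμ : Integrable f μ := (intervalIntegrable_iff_integrableOn_Ioc_of_le hab).1 hf
  have hgμ : Integrable g μ := (intervalIntegrable_iff_integrableOn_Ioc_of_le hab).1 hg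
  have hK : Integrable (fun p : ℝ × ℝ => f p.1 * g p.2) (μ.prod μ) := hfμ.mul_prod hgμ
  have hA : MeasurableSet {p : ℝ × ℝ | p.2 ≤ p.1} :=
    measurableSet_le measurable_snd measurable_fst
  have hlower : ∫ p in {p : ℝ × ℝ | p.2 ≤ p.1}, f p.1 * g p.2 ∂μ.prod μ
      = ∫ x, f x * (∫ t in a..x, g t) ∂μ := by
    rw [← integral_indicator hA, integral_prod _ (hK.indicator hA)]
    refine integral_congr_ae ?_
    filter_upwards [ae_restrict_mem measurableSet_Ioc] with x hx
    rw [← setIntegral_Iic_restrict_Ioc hx, ← integral_const_mul,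
      ← integral_indicator measurableSet_Iic]
    rfl
  have hupper : ∫ p in {p : ℝ × ℝ | p.2 ≤ p.1}ᶜ, f p.1 * g p.2 ∂μ.prod μ
      = ∫ x, (∫ t in a..x, f t) * g x ∂μ := by
    rw [← integral_indicator hA.compl, ← integral_prod_swap,
      integral_prod _ (by exact (hK.indicator hA.compl).swap)]
    refine integral_congr_ae ?_
    filter_upwards [ae_restrict_mem measurableSet_Ioc] with x hx
    rw [← setIntegral_Iic_restrict_Ioc hx, ← setIntegral_congr_set Iio_ae_eq_Iic,
      ← integral_mul_const, ← integral_indicator measurableSet_Iio]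
    congr 1 with y
    simp only [indicator_apply, mem_compl_iff, mem_ofPred_eq, mem_Iio, Prod.swap_prod_mk, not_le]
  rw [← hlower, ← hupper, integral_add_compl hA hK, integral_prod_mul]

theorem mul_sub_mul_eq_integral_of_eq_add_integral {F G : ℝ → ℂ} (hab : a ≤ b)
    (hf : IntervalIntegrable f volume a b) (hg : IntervalIntegrable g volume a b)
    (hF : ∀ z ∈ Icc a b, F z = F a + ∫ t in a..z, f t)
    (hG : ∀ z ∈ Icc a b, G z = G a + ∫ t in a..z, g t) :
    F b * G b - F a * G a = ∫ t in a..b, F t * g t + f t * G t := by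
  have hΦ := intervalIntegral.continuousOn_primitive_interval' hf left_mem_uIcc
  have hΓ := intervalIntegral.continuousOn_primitive_interval' hg left_mem_uIcc
  have hsplit : ∀ t ∈ uIcc a b, F t * g t + f t * G t
      = (F a * g t + f t * G a) + ((f t * ∫ s in a..t, g s) + (∫ s in a..t, f s) * g t) := by
    intro t ht
    rw [uIcc_of_le hab] at ht
    rw [hF t ht, hG t ht]
    ring
  rw [intervalIntegral.integral_congr hsplit,
    intervalIntegral.integral_add ((hg.const_mul _).add (hf.mul_const _))
      ((hf.mul_continuousOn hΓ).add (hg.continuousOn_mul hΦ)),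
    intervalIntegral.integral_add (hg.const_mul _) (hf.mul_const _),
    intervalIntegral.integral_const_mul, intervalIntegral.integral_mul_const,
    integral_mul_primitive_add_primitive_mul hab hf hg, hF b (right_mem_Icc.2 hab),
    hG b (right_mem_Icc.2 hab)]
  ring

end IntegrationByParts

theorem MeasureTheory.IntegrableOn.intervalIntegrable_ofReal_sub {q : ℝ → ℝ}
    (hq : IntegrableOn q (Ioo 0 1)) (lam : ℂ) :
    IntervalIntegrable (fun t => (q t : ℂ) - lam) volume 0 1 := by
  rw [intervalIntegrable_iff_integrableOn_Ioo_of_le zero_le_one]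
  exact hq.ofReal.sub (integrableOn_const measure_Ioo_lt_top.ne)

namespace SchrodingerSol

variable {q : ℝ → ℝ} {lam : ℂ} {u u' : ℝ → ℂ} {c z : ℝ}

theorem continuousOn_of_intervalIntegrable (h : SchrodingerSol q lam u u') (hz : z ∈ Icc 0 1)
    (hi : IntervalIntegrable u' volume 0 z) : ContinuousOn u (Icc 0 z) :=
  continuousOn_of_eq_add_integral hz.1 hi fun y hy => (h y ⟨hy.1, hy.2.trans hz.2⟩).1

theorem intervalIntegrable_mul_of_intervalIntegrable (hq : IntegrableOn q (Ioo 0 1))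
    (h : SchrodingerSol q lam u u') (hz : z ∈ Icc 0 1) (hi : IntervalIntegrable u' volume 0 z) :
    IntervalIntegrable (fun t => ((q t : ℂ) - lam) * u t) volume 0 z := by
  refine ((hq.intervalIntegrable_ofReal_sub lam).mono_Icc (left_mem_Icc.2 zero_le_one) hz)
    |>.mul_continuousOn ?_
  rw [uIcc_of_le hz.1]
  exact h.continuousOn_of_intervalIntegrable hz hi

theorem continuousOn_deriv_of_intervalIntegrable (hq : IntegrableOn q (Ioo 0 1))
    (h : SchrodingerSol q lam u u') (hz : z ∈ Icc 0 1) (hi : IntervalIntegrable u' volume 0 z) :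
    ContinuousOn u' (Icc 0 z) :=
  continuousOn_of_eq_add_integral hz.1 (h.intervalIntegrable_mul_of_intervalIntegrable hq hz hi)
    fun y hy => (h y ⟨hy.1, hy.2.trans hz.2⟩).2

theorem norm_add_norm_le_add_integral (hq : IntegrableOn q (Ioo 0 1))
    (h : SchrodingerSol q lam u u') (hz : z ∈ Icc 0 1) (hi : IntervalIntegrable u' volume 0 z)
    {y : ℝ} (hy : y ∈ Icc 0 z) :
    ‖u z‖ + ‖u' z‖ ≤ ‖u y‖ + ‖u' y‖
      + ∫ t in y..z, (1 + ‖(q t : ℂ) - lam‖) * (‖u t‖ + ‖u' t‖) := by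
  have hzz : z ∈ Icc 0 z := right_mem_Icc.2 hz.1
  have hsol : ∀ x ∈ Icc 0 z, x ∈ Icc (0 : ℝ) 1 := fun x hx => ⟨hx.1, hx.2.trans hz.2⟩
  have hiQu := h.intervalIntegrable_mul_of_intervalIntegrable hq hz hi
  have hu_yz : u z = u y + ∫ t in y..z, u' t :=
    eq_add_integral_of_forall_eq_add_integral hi (fun x hx => (h x (hsol x hx)).1) hy hzz
  have hu'_yz : u' z = u' y + ∫ t in y..z, ((q t : ℂ) - lam) * u t :=
    eq_add_integral_of_forall_eq_add_integral hiQu (fun x hx => (h x (hsol x hx)).2) hy hzz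
  have hiu'_yz := hi.mono_Icc hy hzz
  have hiQu_yz := hiQu.mono_Icc hy hzz
  have hcont : ContinuousOn (fun t => ‖u t‖ + ‖u' t‖) (uIcc y z) := by
    rw [uIcc_of_le hy.2]
    exact ((h.continuousOn_of_intervalIntegrable hz hi).norm.add
      (h.continuousOn_deriv_of_intervalIntegrable hq hz hi).norm).mono
        (Icc_subset_Icc_left hy.1)
  have hiweight : IntervalIntegrable
      (fun t => (1 + ‖(q t : ℂ) - lam‖) * (‖u t‖ + ‖u' t‖)) volume y z :=
    (intervalIntegrable_const.add ((hq.intervalIntegrable_ofReal_sub lam).mono_Icc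
      (hsol y hy) (hsol z hzz)).norm).mul_continuousOn hcont
  calc ‖u z‖ + ‖u' z‖
      ≤ (‖u y‖ + ∫ t in y..z, ‖u' t‖)
          + (‖u' y‖ + ∫ t in y..z, ‖((q t : ℂ) - lam) * u t‖) := by
        rw [hu_yz, hu'_yz]
        gcongr <;> exact (norm_add_le _ _).trans
          (by gcongr; exact intervalIntegral.norm_integral_le_integral_norm hy.2)
    _ = ‖u y‖ + ‖u' y‖ + ∫ t in y..z, ‖u' t‖ + ‖((q t : ℂ) - lam) * u t‖ := by
        rw [intervalIntegral.integral_add hiu'_yz.norm hiQu_yz.norm]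
        ring
    _ ≤ _ := by
        gcongr
        refine intervalIntegral.integral_mono_on hy.2 (hiu'_yz.norm.add hiQu_yz.norm) hiweight
          fun t _ => ?_
        rw [norm_mul]
        nlinarith [norm_nonneg (u t), norm_nonneg (u' t), norm_nonneg ((q t : ℂ) - lam),
          mul_nonneg (norm_nonneg ((q t : ℂ) - lam)) (norm_nonneg (u' t))]

theorem intervalIntegrable_deriv_of_forall_lt (hq : IntegrableOn q (Ioo 0 1))
    (h : SchrodingerSol q lam u u') (hc : c ∈ Icc 0 1)
    (hlt : ∀ z ∈ Ico 0 c, IntervalIntegrable u' volume 0 z) :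
    IntervalIntegrable u' volume 0 c := by
  have hz1 : ∀ z ∈ Ico 0 c, z ∈ Icc (0 : ℝ) 1 := fun z hz => ⟨hz.1, hz.2.le.trans hc.2⟩
  have hcont : ContinuousOn (fun t => ‖u t‖ + ‖u' t‖) (Ico 0 c) :=
    continuousOn_Ico_of_forall_continuousOn_Icc fun z hz =>
      (h.continuousOn_of_intervalIntegrable (hz1 z hz) (hlt z hz)).norm.add
        (h.continuousOn_deriv_of_intervalIntegrable hq (hz1 z hz) (hlt z hz)).norm
  obtain ⟨M, hM⟩ := exists_bound_of_le_add_integral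
    (intervalIntegrable_const.add ((hq.intervalIntegrable_ofReal_sub lam).mono_Icc
      (left_mem_Icc.2 zero_le_one) hc).norm)
    (fun t => by positivity) hcont (fun z _ => by positivity)
    fun y z hy hyz hzc => h.norm_add_norm_le_add_integral hq (hz1 z ⟨hy.trans hyz, hzc⟩)
      (hlt z ⟨hy.trans hyz, hzc⟩) ⟨hy, hyz⟩
  refine .of_continuousOn_Ico_of_bound (M := M) hc.1
    (continuousOn_Ico_of_forall_continuousOn_Icc fun z hz =>
      h.continuousOn_deriv_of_intervalIntegrable hq (hz1 z hz) (hlt z hz)) fun z hz => ?_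
  linarith [hM z hz, norm_nonneg (u z)]

/-- Past the last point up to which `u'` is integrable, the junk value `0` of the integral
makes `u` constant, so `(q - λ) u` and hence `u'` stay integrable after all. -/
theorem exists_gt_intervalIntegrable_deriv (hq : IntegrableOn q (Ioo 0 1))
    (h : SchrodingerSol q lam u u') (hc : c ∈ Ico 0 1) (hi : IntervalIntegrable u' volume 0 c) :
    ∃ w ∈ Ioc c 1, IntervalIntegrable u' volume 0 w := by
  by_contra! hnot
  have hconst : ∀ w ∈ Ioc c 1, u w = u 0 := fun w hw => by
    simpa [intervalIntegral.integral_undef (hnot w hw)] using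
      (h w ⟨hc.1.trans hw.1.le, hw.2⟩).1
  have hc1 : c ∈ Icc (0 : ℝ) 1 := Ico_subset_Icc_self hc
  have hiQu : IntervalIntegrable (fun t => ((q t : ℂ) - lam) * u t) volume 0 1 := by
    refine (h.intervalIntegrable_mul_of_intervalIntegrable hq hc1 hi).trans ?_
    refine (((hq.intervalIntegrable_ofReal_sub lam).mono_Icc hc1
      (right_mem_Icc.2 zero_le_one)).mul_const (u 0)).congr fun t ht => ?_
    rw [uIoc_of_le hc.2.le] at ht
    simp only [hconst t ht]
  have hcont : ContinuousOn u' (Icc 0 1) :=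
    continuousOn_of_eq_add_integral zero_le_one hiQu fun z hz => (h z hz).2
  exact hnot 1 ⟨hc.2, le_rfl⟩ (hcont.intervalIntegrable_of_Icc zero_le_one)

theorem intervalIntegrable_deriv (hq : IntegrableOn q (Ioo 0 1))
    (h : SchrodingerSol q lam u u') : IntervalIntegrable u' volume 0 1 := by
  set D := {z ∈ Icc (0 : ℝ) 1 | IntervalIntegrable u' volume 0 z}
  have hD0 : 0 ∈ D := ⟨left_mem_Icc.2 zero_le_one, .refl⟩
  have hbdd : BddAbove D := ⟨1, fun z hz => hz.1.2⟩
  have hc : sSup D ∈ Icc 0 1 := ⟨le_csSup hbdd hD0, csSup_le ⟨0, hD0⟩ fun z hz => hz.1.2⟩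
  have hcD : IntervalIntegrable u' volume 0 (sSup D) := by
    refine h.intervalIntegrable_deriv_of_forall_lt hq hc fun z hz => ?_
    obtain ⟨w, hw, hzw⟩ := exists_lt_of_lt_csSup ⟨0, hD0⟩ hz.2
    exact hw.2.mono_Icc (left_mem_Icc.2 hw.1.1) ⟨hz.1, hzw.le⟩
  rcases hc.2.lt_or_eq with hc1 | hc1
  · obtain ⟨w, hw, hwi⟩ := h.exists_gt_intervalIntegrable_deriv hq ⟨hc.1, hc1⟩ hcD
    exact absurd (le_csSup hbdd ⟨⟨hc.1.trans hw.1.le, hw.2⟩, hwi⟩) hw.1.not_ge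
  · exact hc1 ▸ hcD

theorem intervalIntegrable_mul (hq : IntegrableOn q (Ioo 0 1))
    (h : SchrodingerSol q lam u u') :
    IntervalIntegrable (fun t => ((q t : ℂ) - lam) * u t) volume 0 1 :=
  h.intervalIntegrable_mul_of_intervalIntegrable hq (right_mem_Icc.2 zero_le_one)
    (h.intervalIntegrable_deriv hq)

theorem wronskian_eq {v v' : ℝ → ℂ} (hq : IntegrableOn q (Ioo 0 1))
    (hu : SchrodingerSol q lam u u') (hv : SchrodingerSol q lam v v') :
    u 1 * v' 1 - u' 1 * v 1 = u 0 * v' 0 - u' 0 * v 0 := by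
  have huv' := mul_sub_mul_eq_integral_of_eq_add_integral zero_le_one
    (hu.intervalIntegrable_deriv hq) (hv.intervalIntegrable_mul hq)
    (fun z hz => (hu z hz).1) (fun z hz => (hv z hz).2)
  have hu'v := mul_sub_mul_eq_integral_of_eq_add_integral zero_le_one
    (hu.intervalIntegrable_mul hq) (hv.intervalIntegrable_deriv hq)
    (fun z hz => (hu z hz).2) (fun z hz => (hv z hz).1)
  have hsame : ∫ t in (0 : ℝ)..1, u t * (((q t : ℂ) - lam) * v t) + u' t * v' t
      = ∫ t in (0 : ℝ)..1, u' t * v' t + ((q t : ℂ) - lam) * u t * v t :=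
    intervalIntegral.integral_congr fun t _ => by ring
  linear_combination huv' - hu'v + hsame

theorem comp_one_sub (hq : IntegrableOn q (Ioo 0 1))
    (hsym : ∀ᵐ z ∂(volume.restrict (Ioo (0 : ℝ) 1)), q z = q (1 - z))
    (h : SchrodingerSol q lam u u') :
    SchrodingerSol q lam (fun z => u (1 - z)) (fun z => -u' (1 - z)) := by
  intro z hz
  have hz' : 1 - z ∈ Icc (0 : ℝ) 1 := ⟨by linarith [hz.2], by linarith [hz.1]⟩
  have h1 : (1 : ℝ) ∈ Icc (0 : ℝ) 1 := right_mem_Icc.2 zero_le_one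
  have hsym' : ∀ᵐ t ∂volume.restrict (uIoc 0 z), q t = q (1 - t) := by
    rw [uIoc_of_le hz.1]
    refine ae_restrict_of_ae_restrict_of_subset (Ioc_subset_Ioc_right hz.2) ?_
    rwa [← Measure.restrict_congr_set Ioo_ae_eq_Ioc]
  constructor
  · have hu1 := eq_add_integral_of_forall_eq_add_integral (h.intervalIntegrable_deriv hq)
      (fun z hz => (h z hz).1) hz' h1
    simp only [sub_zero, intervalIntegral.integral_neg]
    rw [intervalIntegral.integral_comp_sub_left (fun t => u' t), sub_zero, hu1]
    ring
  · have hu'1 := eq_add_integral_of_forall_eq_add_integral (h.intervalIntegrable_mul hq)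
      (fun z hz => (h z hz).2) hz' h1
    have hreflect : ∫ t in (0 : ℝ)..z, ((q t : ℂ) - lam) * u (1 - t)
        = ∫ t in (0 : ℝ)..z, ((q (1 - t) : ℂ) - lam) * u (1 - t) :=
      intervalIntegral.integral_congr_ae_restrict (by filter_upwards [hsym'] with t ht; rw [ht])
    simp only [sub_zero]
    rw [hreflect, intervalIntegral.integral_comp_sub_left (fun t => ((q t : ℂ) - lam) * u t),
      sub_zero, hu'1]
    ring

/-- Wronskian of `u` with the reflected Dirichlet solution `z ↦ S (1 - z)`. -/
theorem apply_one_eq (hq : IntegrableOn q (Ioo 0 1))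
    (hsym : ∀ᵐ z ∂(volume.restrict (Ioo (0 : ℝ) 1)), q z = q (1 - z))
    (hu : SchrodingerSol q lam u u') {S S' : ℝ → ℂ} (hS : SchrodingerSol q lam S S')
    (hS0 : S 0 = 0) (hS'0 : S' 0 = 1) : u 1 = u 0 * S' 1 + u' 0 * S 1 := by
  have hW := hu.wronskian_eq hq (hS.comp_one_sub hq hsym)
  simp only [sub_self, sub_zero, hS0, hS'0] at hW
  linear_combination -hW

end SchrodingerSol

/-- Lemma 3.1: solutions on the four edges incident to a vertex satisfying
the Kirchhoff conditions obey the reduced vertex Schrödinger equation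
`(1/4)·∑ u_j(1)/S_j(1) = ((1/4)·∑ S_j'(1)/S_j(1))·u₁(0)`. -/
theorem reduced_vertex_schrodinger_equation (lam : ℂ) (q : Fin 4 → ℝ → ℝ)
    (hqint : ∀ j, IntegrableOn (q j) (Set.Ioo 0 1))
    (hqsym : ∀ j, ∀ᵐ z ∂(volume.restrict (Set.Ioo (0 : ℝ) 1)), q j z = q j (1 - z))
    (S S' : Fin 4 → ℝ → ℂ)
    (hS : ∀ j, SchrodingerSol (q j) lam (S j) (S' j))
    (hS0 : ∀ j, S j 0 = 0) (hS'0 : ∀ j, S' j 0 = 1)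
    (hS1 : ∀ j, S j 1 ≠ 0)
    (u u' : Fin 4 → ℝ → ℂ)
    (hu : ∀ j, SchrodingerSol (q j) lam (u j) (u' j))
    (hK1 : ∀ j j', u j 0 = u j' 0)
    (hK2 : ∑ j : Fin 4, u' j 0 = 0) :
    (1 / 4 : ℂ) * ∑ j : Fin 4, u j 1 / S j 1
      = ((1 / 4 : ℂ) * ∑ j : Fin 4, S' j 1 / S j 1) * u 0 0 := by
  have hquot : ∀ j, u j 1 / S j 1 = u 0 0 * (S' j 1 / S j 1) + u' j 0 := fun j => by
    rw [(hu j).apply_one_eq (hqint j) (hqsym j) (hS j) (hS0 j) (hS'0 j), hK1 j 0]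
    field_simp [hS1 j]
  simp only [hquot, Finset.sum_add_distrib, hK2, ← Finset.mul_sum]
  ring
end

section
/- For every f : (∂Ω \ (∂Ω)_R) → ℂ and every g : (∂Ω)_L → ℂ, there exists a unique function u : Ω → ℂ satisfying the discrete Schrödinger equation in D_N, u(v) = f(v) for all v ∈ ∂Ω \ (∂Ω)_R, and ∂u(v) = g(v) for all v ∈ (∂Ω)_L. (Lemma 4.1, part (1): unique solvability of the mixed Dirichlet–Neumann partial data problem.) -/
open Set

/-- Vertices of the square lattice. -/
abbrev Vtx : Type := ℤ × ℤ

/-- Two vertices are adjacent iff they differ by `(±1,0)` or `(0,±1)`. -/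
def adjacent (v w : Vtx) : Prop := |v.1 - w.1| + |v.2 - w.2| = 1

/-- Interior vertices `D_N = {0 ≤ n₁, n₂ ≤ N}`. -/
def interiorSq (N : ℕ) : Set Vtx :=
  {v | 0 ≤ v.1 ∧ v.1 ≤ (N : ℤ) ∧ 0 ≤ v.2 ∧ v.2 ≤ (N : ℤ)}

/-- Boundary vertices `∂Ω`. -/
def bdrySq (N : ℕ) : Set Vtx :=
  {v | v ∉ interiorSq N ∧ ∃ w ∈ interiorSq N, adjacent v w}

/-- `Ω = D_N ∪ ∂Ω`. -/
def omegaSq (N : ℕ) : Set Vtx := interiorSq N ∪ bdrySq N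

/-- Left side `(∂Ω)_L`. -/
def bdryL (N : ℕ) : Set Vtx := {v | v.1 = -1 ∧ 0 ≤ v.2 ∧ v.2 ≤ (N : ℤ)}

/-- Right side `(∂Ω)_R`. -/
def bdryR (N : ℕ) : Set Vtx := {v | v.1 = (N : ℤ) + 1 ∧ 0 ≤ v.2 ∧ v.2 ≤ (N : ℤ)}

/-- Top side `(∂Ω)_T`. -/
def bdryT (N : ℕ) : Set Vtx := {v | v.2 = (N : ℤ) + 1 ∧ 0 ≤ v.1 ∧ v.1 ≤ (N : ℤ)}

/-- Bottom side `(∂Ω)_B`. -/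
def bdryB (N : ℕ) : Set Vtx := {v | v.2 = -1 ∧ 0 ≤ v.1 ∧ v.1 ≤ (N : ℤ)}

/-- For a boundary vertex, its unique neighbor `w(v)` in `D_N`. -/
def intNbr (N : ℕ) (v : Vtx) : Vtx :=
  if v.1 = -1 then (v.1 + 1, v.2)
  else if v.1 = (N : ℤ) + 1 then (v.1 - 1, v.2)
  else if v.2 = -1 then (v.1, v.2 + 1)
  else (v.1, v.2 - 1)

/-- `u` satisfies the discrete Schrödinger equation
`(1/4)·∑_{w ∈ Ω, w ∼ v} c({v,w})·u(w) = m(v)·u(v)` at every `v ∈ D_N`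
(for `v ∈ D_N` all four neighbors lie in `Ω`). -/
def DiscreteSchrodinger (N : ℕ) (c : Vtx → Vtx → ℂ) (m : Vtx → ℂ) (u : Vtx → ℂ) : Prop :=
  ∀ v ∈ interiorSq N,
    (1 / 4 : ℂ) * (c v (v + (1, 0)) * u (v + (1, 0)) + c v (v - (1, 0)) * u (v - (1, 0))
        + c v (v + (0, 1)) * u (v + (0, 1)) + c v (v - (0, 1)) * u (v - (0, 1)))
      = m v * u v

/-- The edge weights are symmetric (weights of unordered pairs) and nonvanishing
on the edges of `E_Ω`. -/
def WeightsOK (N : ℕ) (c : Vtx → Vtx → ℂ) : Prop :=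
  (∀ v w, c v w = c w v) ∧
  ∀ v w, v ∈ omegaSq N → w ∈ omegaSq N → adjacent v w →
    (v ∈ interiorSq N ∨ w ∈ interiorSq N) → c v w ≠ 0

-- adjacency classification
lemma adj_cases {v w : Vtx} (h : adjacent v w) :
    (v.1 - w.1 = 1 ∧ v.2 = w.2) ∨ (v.1 - w.1 = -1 ∧ v.2 = w.2) ∨
    (v.1 = w.1 ∧ v.2 - w.2 = 1) ∨ (v.1 = w.1 ∧ v.2 - w.2 = -1) := by
  unfold adjacent at h
  rcases abs_cases (v.1 - w.1) with ⟨h1, _⟩ | ⟨h1, _⟩ <;>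
    rcases abs_cases (v.2 - w.2) with ⟨h2, _⟩ | ⟨h2, _⟩ <;> omega

lemma adj_mk {v w : Vtx}
    (h : (v.1 - w.1 = 1 ∧ v.2 = w.2) ∨ (v.1 - w.1 = -1 ∧ v.2 = w.2) ∨
      (v.1 = w.1 ∧ v.2 - w.2 = 1) ∨ (v.1 = w.1 ∧ v.2 - w.2 = -1)) : adjacent v w := by
  unfold adjacent
  rcases abs_cases (v.1 - w.1) with ⟨h1, _⟩ | ⟨h1, _⟩ <;>
    rcases abs_cases (v.2 - w.2) with ⟨h2, _⟩ | ⟨h2, _⟩ <;> omega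

lemma mem_bdry' (N : ℕ) (a b : ℤ)
    (h : (a = -1 ∧ 0 ≤ b ∧ b ≤ (N:ℤ)) ∨ (a = (N:ℤ)+1 ∧ 0 ≤ b ∧ b ≤ (N:ℤ)) ∨
      (b = -1 ∧ 0 ≤ a ∧ a ≤ (N:ℤ)) ∨ (b = (N:ℤ)+1 ∧ 0 ≤ a ∧ a ≤ (N:ℤ))) :
    (a, b) ∈ bdrySq N := by
  constructor
  · simp only [interiorSq, mem_setOf_eq]; omega
  · rcases h with ⟨h1, h2⟩ | ⟨h1, h2⟩ | ⟨h1, h2⟩ | ⟨h1, h2⟩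
    · exact ⟨(a+1, b), by simp only [interiorSq, mem_setOf_eq]; omega, adj_mk (by simp)⟩
    · exact ⟨(a-1, b), by simp only [interiorSq, mem_setOf_eq]; omega, adj_mk (by simp)⟩
    · exact ⟨(a, b+1), by simp only [interiorSq, mem_setOf_eq]; omega, adj_mk (by simp)⟩
    · exact ⟨(a, b-1), by simp only [interiorSq, mem_setOf_eq]; omega, adj_mk (by simp)⟩

lemma bdry_cases {N : ℕ} {a b : ℤ} (h : (a, b) ∈ bdrySq N) :
    (a = -1 ∧ 0 ≤ b ∧ b ≤ (N:ℤ)) ∨ (a = (N:ℤ)+1 ∧ 0 ≤ b ∧ b ≤ (N:ℤ)) ∨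
      (b = -1 ∧ 0 ≤ a ∧ a ≤ (N:ℤ)) ∨ (b = (N:ℤ)+1 ∧ 0 ≤ a ∧ a ≤ (N:ℤ)) := by
  obtain ⟨hni, w, hw, hadj⟩ := h
  have := adj_cases hadj
  simp only [interiorSq, mem_setOf_eq] at hni hw
  omega

lemma mem_omega' (N : ℕ) (a b : ℤ)
    (h : (0 ≤ a ∧ a ≤ (N:ℤ) ∧ 0 ≤ b ∧ b ≤ (N:ℤ)) ∨
      (a = -1 ∧ 0 ≤ b ∧ b ≤ (N:ℤ)) ∨ (a = (N:ℤ)+1 ∧ 0 ≤ b ∧ b ≤ (N:ℤ)) ∨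
      (b = -1 ∧ 0 ≤ a ∧ a ≤ (N:ℤ)) ∨ (b = (N:ℤ)+1 ∧ 0 ≤ a ∧ a ≤ (N:ℤ))) :
    (a, b) ∈ omegaSq N := by
  rcases h with h | h
  · exact Or.inl (by simpa [interiorSq] using h)
  · exact Or.inr (mem_bdry' N a b h)

lemma omega_cases {N : ℕ} {a b : ℤ} (h : (a, b) ∈ omegaSq N) :
    (0 ≤ a ∧ a ≤ (N:ℤ) ∧ 0 ≤ b ∧ b ≤ (N:ℤ)) ∨
      (a = -1 ∧ 0 ≤ b ∧ b ≤ (N:ℤ)) ∨ (a = (N:ℤ)+1 ∧ 0 ≤ b ∧ b ≤ (N:ℤ)) ∨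
      (b = -1 ∧ 0 ≤ a ∧ a ≤ (N:ℤ)) ∨ (b = (N:ℤ)+1 ∧ 0 ≤ a ∧ a ≤ (N:ℤ)) := by
  rcases h with h | h
  · exact Or.inl (by simpa [interiorSq] using h)
  · exact Or.inr (bdry_cases h)

noncomputable def col (N : ℕ) (c : Vtx → Vtx → ℂ) (q f g : Vtx → ℂ) : ℕ → ℤ → ℂ
  | 0 => fun j => f (-1, j)
  | 1 => fun j => if 0 ≤ j ∧ j ≤ (N:ℤ) then -g (-1, j) else f (0, j)
  | (k+2) => fun j =>
      if 0 ≤ j ∧ j ≤ (N:ℤ) ∧ k ≤ N then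
        (4 * q ((k:ℤ), j) * col N c q f g (k+1) j
          - c ((k:ℤ), j) ((k:ℤ) - 1, j) * col N c q f g k j
          - c ((k:ℤ), j) ((k:ℤ), j + 1) * col N c q f g (k+1) (j+1)
          - c ((k:ℤ), j) ((k:ℤ), j - 1) * col N c q f g (k+1) (j-1))
          / c ((k:ℤ), j) ((k:ℤ) + 1, j)
      else f ((k:ℤ) + 1, j)

noncomputable def usol (N : ℕ) (c : Vtx → Vtx → ℂ) (q f g : Vtx → ℂ) (v : Vtx) : ℂ :=
  col N c q f g (v.1 + 1).toNat v.2

lemma col_out (N : ℕ) (c : Vtx → Vtx → ℂ) (q f g : Vtx → ℂ) (k : ℕ) (j : ℤ)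
    (hj : ¬ (0 ≤ j ∧ j ≤ (N:ℤ))) :
    col N c q f g k j = f ((k:ℤ) - 1, j) := by
  match k with
  | 0 => norm_num [col]
  | 1 => simp only [col]; rw [if_neg hj]; norm_num
  | (k+2) =>
    simp only [col]
    rw [if_neg (by tauto)]
    push_cast
    ring_nf

/-- Lemma 4.1(1): unique solvability of the mixed Dirichlet–Neumann
partial data problem: Dirichlet data on `∂Ω \ (∂Ω)_R`, Neumann data on `(∂Ω)_L`. -/
theorem mixed_partial_data_unique_solvability (N : ℕ) (hN : 1 ≤ N)
    (c : Vtx → Vtx → ℂ) (m : Vtx → ℂ) (hc : WeightsOK N c)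
    (f : Vtx → ℂ) (g : Vtx → ℂ) :
    ∃ u : Vtx → ℂ,
      (DiscreteSchrodinger N c m u ∧ (∀ v ∈ bdrySq N \ bdryR N, u v = f v) ∧
        ∀ v ∈ bdryL N, -u (intNbr N v) = g v) ∧
      ∀ u' : Vtx → ℂ,
        (DiscreteSchrodinger N c m u' ∧ (∀ v ∈ bdrySq N \ bdryR N, u' v = f v) ∧
          ∀ v ∈ bdryL N, -u' (intNbr N v) = g v) →
        Set.EqOn u' u (omegaSq N) := by
  classical
  have hcne : ∀ a b : ℤ, 0 ≤ a → a ≤ (N:ℤ) → 0 ≤ b → b ≤ (N:ℤ) → c (a,b) (a+1,b) ≠ 0 := by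
    intro a b h1 h2 h3 h4
    exact hc.2 (a,b) (a+1,b) (mem_omega' N a b (by omega)) (mem_omega' N (a+1) b (by omega))
      (adj_mk (by simp)) (Or.inl (by simp only [interiorSq, mem_setOf_eq]; omega))
  set u := usol N c m f g with hu
  have hSch : DiscreteSchrodinger N c m u := by
    intro v hv
    obtain ⟨n, j⟩ := v
    simp only [interiorSq, mem_setOf_eq] at hv
    obtain ⟨hn0, hnN, hj0, hjN⟩ := hv
    have hk : ((n.toNat : ℤ)) = n := Int.toNat_of_nonneg hn0
    set k := n.toNat with hkdef
    simp only [hu, usol, Prod.mk_add_mk, Prod.mk_sub_mk, add_zero, sub_zero]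
    have h1 : (n+1+1).toNat = k+2 := by omega
    have h2 : (n-1+1).toNat = k := by omega
    have h3 : (n+1).toNat = k+1 := by omega
    rw [h1, h2, h3, ← hk]
    have hcz : c ((k:ℤ), j) ((k:ℤ)+1, j) ≠ 0 := hcne _ _ (by omega) (by omega) hj0 hjN
    simp only [col]
    rw [if_pos ⟨hj0, hjN, by omega⟩]
    field_simp
    ring
  have hDir : ∀ v ∈ bdrySq N \ bdryR N, u v = f v := by
    rintro ⟨a, b⟩ ⟨hb, hnr⟩
    have h4 := bdry_cases hb
    have hnr' : ¬(a = (N:ℤ)+1 ∧ 0 ≤ b ∧ b ≤ (N:ℤ)) := by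
      simpa [bdryR, mem_setOf_eq] using hnr
    rcases h4 with ⟨h1, h2, h3⟩ | h4 | ⟨h1, h2, h3⟩ | ⟨h1, h2, h3⟩
    · subst h1
      have e : ((-1:ℤ)+1).toNat = 0 := rfl
      simp [hu, usol, e, col]
    · exact absurd h4 hnr'
    all_goals {
      simp only [hu, usol]
      rw [col_out _ _ _ _ _ _ _ (by omega)]
      rw [show (((a+1).toNat : ℤ)) - 1 = a by omega] }
  have hNeu : ∀ v ∈ bdryL N, -u (intNbr N v) = g v := by
    rintro ⟨a, b⟩ hv
    simp only [bdryL, mem_setOf_eq] at hv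
    obtain ⟨ha, hb0, hbN⟩ := hv
    subst ha
    have hi : intNbr N (-1, b) = (0, b) := by simp [intNbr]
    rw [hi]
    have e : ((0:ℤ)+1).toNat = 1 := rfl
    simp only [hu, usol, e]
    simp only [col]
    rw [if_pos ⟨hb0, hbN⟩, neg_neg]
  refine ⟨u, ⟨hSch, hDir, hNeu⟩, ?_⟩
  rintro u' ⟨hS', hD', hN'⟩
  have key : ∀ k : ℕ, ∀ a j : ℤ, a + 1 = (k:ℤ) → (a, j) ∈ omegaSq N →
      u' (a, j) = col N c m f g k j := by
    intro k
    induction k using Nat.strong_induction_on with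
    | _ k ih =>
      match k, ih with
      | 0, _ =>
        intro a j hk hmem
        have ha : a = -1 := by omega
        subst ha
        have h5 := omega_cases hmem
        have hj : 0 ≤ j ∧ j ≤ (N:ℤ) := by omega
        have hD := hD' (-1, j) ⟨mem_bdry' N _ _ (by omega),
          by simp only [bdryR, mem_setOf_eq]; omega⟩
        rw [hD]; simp [col]
      | 1, _ =>
        intro a j hk hmem
        have ha : a = 0 := by omega
        subst ha
        have h5 := omega_cases hmem
        by_cases hj : 0 ≤ j ∧ j ≤ (N:ℤ)
        · have hmemL : ((-1:ℤ), j) ∈ bdryL N := by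
            simp only [bdryL, mem_setOf_eq]; exact ⟨by norm_num, hj⟩
          have hg := hN' (-1, j) hmemL
          have hi : intNbr N (-1, j) = (0, j) := by simp [intNbr]
          rw [hi] at hg
          have hcol : col N c m f g 1 j = -g (-1, j) := by
            simp only [col]; rw [if_pos hj]
          rw [hcol]
          linear_combination -hg
        · have hD := hD' (0, j) ⟨mem_bdry' N _ _ (by omega),
            by simp only [bdryR, mem_setOf_eq]; omega⟩
          have hcol : col N c m f g 1 j = f (0, j) := by
            simp only [col]; rw [if_neg hj]
          rw [hD, hcol]
      | (k+2), ih =>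
        intro a j hk hmem
        have ha : a = (k:ℤ) + 1 := by push_cast at hk; omega
        subst ha
        have h5 := omega_cases hmem
        by_cases hj : 0 ≤ j ∧ j ≤ (N:ℤ) ∧ k ≤ N
        · obtain ⟨hj0, hjN, hkN⟩ := hj
          have heq := hS' ((k:ℤ), j) (by simp only [interiorSq, mem_setOf_eq]; omega)
          simp only [Prod.mk_add_mk, Prod.mk_sub_mk, add_zero, sub_zero] at heq
          have ihA : u' ((k:ℤ)-1, j) = col N c m f g k j :=
            ih k (by omega) _ j (by ring) (mem_omega' N _ _ (by omega))
          have ihB : u' ((k:ℤ), j) = col N c m f g (k+1) j :=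
            ih (k+1) (by omega) _ j (by push_cast; ring) (mem_omega' N _ _ (by omega))
          have ihC : u' ((k:ℤ), j+1) = col N c m f g (k+1) (j+1) :=
            ih (k+1) (by omega) _ (j+1) (by push_cast; ring) (mem_omega' N _ _ (by omega))
          have ihD : u' ((k:ℤ), j-1) = col N c m f g (k+1) (j-1) :=
            ih (k+1) (by omega) _ (j-1) (by push_cast; ring) (mem_omega' N _ _ (by omega))
          rw [ihA, ihB, ihC, ihD] at heq
          simp only [col]
          rw [if_pos ⟨hj0, hjN, hkN⟩]
          rw [eq_div_iff (hcne (k:ℤ) j (by omega) (by omega) hj0 hjN)]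
          linear_combination 4 * heq
        · have hj' : ¬(0 ≤ j ∧ j ≤ (N:ℤ)) := by omega
          have hD := hD' ((k:ℤ)+1, j) ⟨mem_bdry' N _ _ (by omega),
            by simp only [bdryR, mem_setOf_eq]; omega⟩
          rw [hD, col_out _ _ _ _ _ _ _ hj']
          rw [show (((k+2:ℕ):ℤ)) - 1 = (k:ℤ)+1 by push_cast; ring]
  intro v hv
  obtain ⟨a, b⟩ := v
  have h5 := omega_cases hv
  have ha : -1 ≤ a := by omega
  have hkey := key (a+1).toNat a b (by omega) hv
  rw [hkey]
  simp only [hu, usol]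
end

section
/- If u : Ω → ℂ satisfies the discrete Schrödinger equation in D_N, u(v) = 0 for all v ∈ ∂Ω \ (∂Ω)_R, and ∂u(v) = 0 for all v ∈ (∂Ω)_L, then u vanishes identically on Ω; in particular u = 0 on (∂Ω)_R. (Vanishing step in the proof of Lemma 4.1(2).) -/
open Set

/-- vanishing step in Lemma 4.1(2): a solution with zero Dirichlet data on
`∂Ω \ (∂Ω)_R` and zero Neumann data on `(∂Ω)_L` vanishes identically on `Ω`;
in particular it vanishes on `(∂Ω)_R`. -/
theorem zero_partial_data_implies_zero (N : ℕ) (hN : 1 ≤ N)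
    (c : Vtx → Vtx → ℂ) (m : Vtx → ℂ) (hc : WeightsOK N c)
    (u : Vtx → ℂ) (hu : DiscreteSchrodinger N c m u)
    (hDir : ∀ v ∈ bdrySq N \ bdryR N, u v = 0)
    (hNeu : ∀ v ∈ bdryL N, -u (intNbr N v) = 0) :
    (∀ v ∈ omegaSq N, u v = 0) ∧ ∀ v ∈ bdryR N, u v = 0 := by
  obtain ⟨hsym, hne⟩ := hc
  -- adjacency helpers
  have adjh : ∀ a b : ℤ, adjacent (a, b) (a + 1, b) := by
    intro a b; unfold adjacent; simp
  have adjv : ∀ a b : ℤ, adjacent (a, b) (a, b + 1) := by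
    intro a b; unfold adjacent; simp
  have adjv' : ∀ a b : ℤ, adjacent (a, b - 1) (a, b) := by
    intro a b; unfold adjacent; simp
  -- boundary membership helpers
  have memL : ∀ y : ℤ, 0 ≤ y → y ≤ (N : ℤ) → ((-1, y) : Vtx) ∈ bdrySq N \ bdryR N := by
    intro y h1 h2
    refine ⟨⟨?_, ⟨(0, y), ⟨le_refl _, by positivity, h1, h2⟩, ?_⟩⟩, ?_⟩
    · intro h; have := h.1; omega
    · have := adjh (-1) y; simpa using this
    · intro h; have := h.1; omega
  have memR : ∀ y : ℤ, 0 ≤ y → y ≤ (N : ℤ) → (((N : ℤ) + 1, y) : Vtx) ∈ bdrySq N := by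
    intro y h1 h2
    refine ⟨?_, ⟨((N : ℤ), y), ⟨by positivity, le_refl _, h1, h2⟩, ?_⟩⟩
    · intro h; have := h.2.1; omega
    · unfold adjacent; simp
  have memT : ∀ x : ℤ, 0 ≤ x → x ≤ (N : ℤ) → ((x, (N : ℤ) + 1) : Vtx) ∈ bdrySq N \ bdryR N := by
    intro x h1 h2
    refine ⟨⟨?_, ⟨(x, (N : ℤ)), ⟨h1, h2, by positivity, le_refl _⟩, ?_⟩⟩, ?_⟩
    · intro h; have := h.2.2.2; omega
    · unfold adjacent; simp
    · intro h; have := h.2.2; omega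
  have memB : ∀ x : ℤ, 0 ≤ x → x ≤ (N : ℤ) → ((x, -1) : Vtx) ∈ bdrySq N \ bdryR N := by
    intro x h1 h2
    refine ⟨⟨?_, ⟨(x, 0), ⟨h1, h2, le_refl _, by positivity⟩, ?_⟩⟩, ?_⟩
    · intro h; have := h.2.2.1; omega
    · have := adjv' x 0; simpa using this
    · intro h; have := h.2.1; omega
  -- main induction over columns
  have natkey : ∀ k : ℕ, k ≤ N + 2 → ∀ y : ℤ, 0 ≤ y → y ≤ (N : ℤ) → u ((k : ℤ) - 1, y) = 0 := by
    intro k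
    induction k using Nat.strong_induction_on with
    | _ k ih =>
      intro hk y hy0 hyN
      rcases k with _ | _ | m
      · have h0 : ((0 : ℕ) : ℤ) - 1 = -1 := by norm_num
        rw [h0]
        exact hDir (-1, y) (memL y hy0 hyN)
      · have h := hNeu (-1, y) ⟨rfl, hy0, hyN⟩
        have h1 : intNbr N (-1, y) = (0, y) := by simp [intNbr]
        rw [h1, neg_eq_zero] at h
        have h2 : (((1 : ℕ) : ℤ) - 1, y) = ((0 : ℤ), y) := by norm_num
        rw [h2]; exact h
      · -- k = m + 2
        have hmN : (m : ℤ) ≤ (N : ℤ) := by exact_mod_cast Nat.le_of_succ_le_succ (Nat.le_of_succ_le_succ hk)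
        set v : Vtx := ((m : ℤ), y) with hvdef
        have hv : v ∈ interiorSq N := ⟨by positivity, hmN, hy0, hyN⟩
        have h0 : u v = 0 := by
          have := ih (m + 1) (by omega) (by omega) y hy0 hyN
          have e : ((↑(m + 1) : ℤ) - 1, y) = v := by simp [hvdef]
          rwa [e] at this
        have hL : u (v - (1, 0)) = 0 := by
          have := ih m (by omega) (by omega) y hy0 hyN
          have e : ((↑m : ℤ) - 1, y) = v - (1, 0) := by simp [hvdef, Prod.ext_iff]
          rwa [e] at this
        have hU : u (v + (0, 1)) = 0 := by
          have e : v + (0, 1) = ((m : ℤ), y + 1) := by simp [hvdef, Prod.ext_iff]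
          rw [e]
          rcases eq_or_lt_of_le hyN with h | h
          · have : y + 1 = (N : ℤ) + 1 := by omega
            rw [this]
            exact hDir _ (memT (m : ℤ) (by positivity) hmN)
          · have := ih (m + 1) (by omega) (by omega) (y + 1) (by omega) (by omega)
            have e2 : ((↑(m + 1) : ℤ) - 1, y + 1) = ((m : ℤ), y + 1) := by simp
            rwa [e2] at this
        have hD : u (v - (0, 1)) = 0 := by
          have e : v - (0, 1) = ((m : ℤ), y - 1) := by simp [hvdef, Prod.ext_iff]
          rw [e]
          rcases eq_or_lt_of_le hy0 with h | h
          · have : y - 1 = (-1 : ℤ) := by omega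
            rw [this]
            exact hDir _ (memB (m : ℤ) (by positivity) hmN)
          · have := ih (m + 1) (by omega) (by omega) (y - 1) (by omega) (by omega)
            have e2 : ((↑(m + 1) : ℤ) - 1, y - 1) = ((m : ℤ), y - 1) := by simp
            rwa [e2] at this
        have heq := hu v hv
        rw [h0, hL, hU, hD, mul_zero, mul_zero, mul_zero, mul_zero, add_zero, add_zero, add_zero] at heq
        have hwΩ : v + (1, 0) ∈ omegaSq N := by
          have e : v + (1, 0) = ((m : ℤ) + 1, y) := by simp [hvdef, Prod.ext_iff]
          rw [e]
          rcases eq_or_lt_of_le hmN with h | h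
          · right; rw [h]; exact memR y hy0 hyN
          · left; exact ⟨by positivity, by omega, hy0, hyN⟩
        have hadj : adjacent v (v + (1, 0)) := by
          have e : v + (1, 0) = ((m : ℤ) + 1, y) := by simp [hvdef, Prod.ext_iff]
          rw [e]; exact adjh _ _
        have hcne : c v (v + (1, 0)) ≠ 0 := hne v (v + (1, 0)) (Or.inl hv) hwΩ hadj (Or.inl hv)
        have hzero : u (v + (1, 0)) = 0 := by
          have h4 : c v (v + (1, 0)) * u (v + (1, 0)) = 0 := by
            have := heq
            field_simp at this
            linear_combination this
          rcases mul_eq_zero.mp h4 with h | h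
          · exact absurd h hcne
          · exact h
        have e : ((↑(m + 2) : ℤ) - 1, y) = v + (1, 0) := by
          simp [hvdef, Prod.ext_iff]; push_cast; ring
        rw [e]; exact hzero
  have key : ∀ x y : ℤ, -1 ≤ x → x ≤ (N : ℤ) + 1 → 0 ≤ y → y ≤ (N : ℤ) → u (x, y) = 0 := by
    intro x y hx1 hx2 hy1 hy2
    obtain ⟨k, hk⟩ : ∃ k : ℕ, x = (k : ℤ) - 1 := ⟨(x + 1).toNat, by omega⟩
    subst hk
    exact natkey k (by omega) y hy1 hy2
  constructor
  · rintro ⟨a, b⟩ hv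
    rcases hv with h | h
    · obtain ⟨h1, h2, h3, h4⟩ := h
      exact key a b (by omega) (by omega) h3 h4
    · by_cases hr : ((a, b) : Vtx) ∈ bdryR N
      · obtain ⟨h1, h2, h3⟩ := hr
        exact key a b (by omega) (by omega) h2 h3
      · exact hDir (a, b) ⟨h, hr⟩
  · rintro ⟨a, b⟩ ⟨h1, h2, h3⟩
    exact key a b (by omega) (by omega) h2 h3
end

section
/- The linear map ℂ^{(∂Ω)_R} → ℂ^{(∂Ω)_L} sending h₀ : (∂Ω)_R → ℂ to the restriction (Λ_V h)|_{(∂Ω)_L}, where h : ∂Ω → ℂ is the extension of h₀ by zero on ∂Ω \ (∂Ω)_R, is a bijection; i.e. the submatrix Λ_V((∂Ω)_L ; (∂Ω)_R) of the vertex Dirichlet-to-Neumann map is invertible. (Key step in the proof of Lemma 4.1(2).) -/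
open Set

/-! ### Auxiliary lemmas -/

lemma adjacent_horiz (x y : ℤ) : adjacent (x, y) (x + 1, y) := by
  simp only [adjacent]; rw [show x - (x+1) = -1 by ring]; simp

lemma adjacent_horiz' (x y : ℤ) : adjacent (x + 1, y) (x, y) := by
  simp only [adjacent]; rw [show x + 1 - x = 1 by ring]; simp

lemma adjacent_vert (x y : ℤ) : adjacent (x, y) (x, y + 1) := by
  simp only [adjacent]; rw [show y - (y+1) = -1 by ring]; simp

lemma adjacent_vert' (x y : ℤ) : adjacent (x, y + 1) (x, y) := by
  simp only [adjacent]; rw [show y + 1 - y = 1 by ring]; simp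

lemma mem_int (N : ℕ) {x y : ℤ} (h1 : 0 ≤ x) (h2 : x ≤ N) (h3 : 0 ≤ y) (h4 : y ≤ N) :
    ((x, y) : Vtx) ∈ interiorSq N := ⟨h1, h2, h3, h4⟩

lemma left_mem_bdry (N : ℕ) {y : ℤ} (h3 : 0 ≤ y) (h4 : y ≤ N) :
    ((-1, y) : Vtx) ∈ bdrySq N := by
  refine ⟨fun h => by have := h.1; norm_num at this,
    ⟨(0, y), mem_int N le_rfl (by positivity) h3 h4, ?_⟩⟩
  have := adjacent_horiz (-1) y; norm_num at this; exact this

lemma right_mem_bdry (N : ℕ) {y : ℤ} (h3 : 0 ≤ y) (h4 : y ≤ N) :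
    (((N : ℤ) + 1, y) : Vtx) ∈ bdrySq N := by
  refine ⟨fun h => by have := h.2.1; omega,
    ⟨((N : ℤ), y), mem_int N (by positivity) le_rfl h3 h4, adjacent_horiz' _ _⟩⟩

lemma top_mem_bdry (N : ℕ) {x : ℤ} (h1 : 0 ≤ x) (h2 : x ≤ N) :
    ((x, (N : ℤ) + 1) : Vtx) ∈ bdrySq N := by
  refine ⟨fun h => by have := h.2.2.2; omega,
    ⟨(x, (N : ℤ)), mem_int N h1 h2 (by positivity) le_rfl, adjacent_vert' _ _⟩⟩

lemma bot_mem_bdry (N : ℕ) {x : ℤ} (h1 : 0 ≤ x) (h2 : x ≤ N) :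
    ((x, -1) : Vtx) ∈ bdrySq N := by
  refine ⟨fun h => by have := h.2.2.1; norm_num at this,
    ⟨(x, 0), mem_int N h1 h2 le_rfl (by positivity), ?_⟩⟩
  have := adjacent_vert x (-1); norm_num at this; exact this

lemma left_not_R (N : ℕ) (y : ℤ) : ((-1, y) : Vtx) ∉ bdryR N := by
  intro h; have := h.1; simp only at this; omega

lemma top_not_R (N : ℕ) (x : ℤ) : ((x, (N : ℤ) + 1) : Vtx) ∉ bdryR N := by
  intro h; have := h.2.2; simp only at this; omega

lemma bot_not_R (N : ℕ) (x : ℤ) : ((x, -1) : Vtx) ∉ bdryR N := by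
  intro h; have := h.2.1; simp only at this; omega

/-- Equivalence of the right boundary with an interval. -/
def bdryREquiv (N : ℕ) : {v : Vtx // v ∈ bdryR N} ≃ Set.Icc (0 : ℤ) (N : ℤ) where
  toFun v := ⟨v.1.2, Set.mem_Icc.mpr ⟨v.2.2.1, v.2.2.2⟩⟩
  invFun y := ⟨((N : ℤ) + 1, y.1), ⟨rfl, (Set.mem_Icc.mp y.2).1, (Set.mem_Icc.mp y.2).2⟩⟩
  left_inv v := Subtype.ext (Prod.ext v.2.1.symm rfl)
  right_inv y := rfl

/-- Equivalence of the left boundary with an interval. -/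
def bdryLEquiv (N : ℕ) : {v : Vtx // v ∈ bdryL N} ≃ Set.Icc (0 : ℤ) (N : ℤ) where
  toFun v := ⟨v.1.2, Set.mem_Icc.mpr ⟨v.2.2.1, v.2.2.2⟩⟩
  invFun y := ⟨(-1, y.1), ⟨rfl, (Set.mem_Icc.mp y.2).1, (Set.mem_Icc.mp y.2).2⟩⟩
  left_inv v := Subtype.ext (Prod.ext v.2.1.symm rfl)
  right_inv y := rfl

noncomputable instance instFintypeBdryR (N : ℕ) : Fintype {v : Vtx // v ∈ bdryR N} :=
  Fintype.ofEquiv _ (bdryREquiv N).symm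

noncomputable instance instFintypeBdryL (N : ℕ) : Fintype {v : Vtx // v ∈ bdryL N} :=
  Fintype.ofEquiv _ (bdryLEquiv N).symm

open scoped Classical in
/-- Extension by zero of a function on the right boundary. -/
noncomputable def extR (N : ℕ) (h₀ : {v : Vtx // v ∈ bdryR N} → ℂ) : Vtx → ℂ :=
  fun x => if hx : x ∈ bdryR N then h₀ ⟨x, hx⟩ else 0

lemma extR_not_mem (N : ℕ) (h₀ : {v : Vtx // v ∈ bdryR N} → ℂ) {x : Vtx}
    (hx : x ∉ bdryR N) : extR N h₀ x = 0 := dif_neg hx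

lemma extR_mem (N : ℕ) (h₀ : {v : Vtx // v ∈ bdryR N} → ℂ) {x : Vtx}
    (hx : x ∈ bdryR N) : extR N h₀ x = h₀ ⟨x, hx⟩ := dif_pos hx

lemma extR_add (N : ℕ) (a b : {v : Vtx // v ∈ bdryR N} → ℂ) :
    extR N (a + b) = fun x => extR N a x + extR N b x := by
  funext x
  by_cases hx : x ∈ bdryR N
  · rw [extR_mem N _ hx, extR_mem N _ hx, extR_mem N _ hx]; rfl
  · rw [extR_not_mem N _ hx, extR_not_mem N _ hx, extR_not_mem N _ hx]; ring

lemma extR_smul (N : ℕ) (s : ℂ) (a : {v : Vtx // v ∈ bdryR N} → ℂ) :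
    extR N (s • a) = fun x => s * extR N a x := by
  funext x
  by_cases hx : x ∈ bdryR N
  · rw [extR_mem N _ hx, extR_mem N _ hx]; rfl
  · rw [extR_not_mem N _ hx, extR_not_mem N _ hx]; ring

/-- Propagation of vanishing, column by column. -/
lemma key_vanish (N : ℕ) (c : Vtx → Vtx → ℂ) (m : Vtx → ℂ) (hc : WeightsOK N c)
    (u : Vtx → ℂ) (hu : DiscreteSchrodinger N c m u)
    (hL : ∀ y : ℤ, 0 ≤ y → y ≤ N → u (-1, y) = 0)
    (hT : ∀ x : ℤ, 0 ≤ x → x ≤ N → u (x, (N : ℤ) + 1) = 0)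
    (hB : ∀ x : ℤ, 0 ≤ x → x ≤ N → u (x, -1) = 0)
    (h0 : ∀ y : ℤ, 0 ≤ y → y ≤ N → u (0, y) = 0) :
    ∀ k : ℕ, k ≤ N + 1 → ∀ y : ℤ, 0 ≤ y → y ≤ N → u ((k : ℤ), y) = 0 := by
  intro k
  induction k using Nat.strong_induction_on with
  | _ k ih =>
    intro hk y hy0 hyN
    match k, hk, ih with
    | 0, _, _ => simpa using h0 y hy0 hyN
    | (j+1), hk, ih =>
      have hjN : (j : ℤ) ≤ (N : ℤ) := by exact_mod_cast (by omega : j ≤ N)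
      have hj0 : (0 : ℤ) ≤ (j : ℤ) := by positivity
      have hv : (((j : ℤ), y) : Vtx) ∈ interiorSq N := mem_int N hj0 hjN hy0 hyN
      have heq := hu ((j : ℤ), y) hv
      have e1 : ((((j : ℤ), y) : Vtx) + (1, 0)) = (((j : ℤ) + 1, y) : Vtx) := by
        simp [Prod.ext_iff]
      have e2 : ((((j : ℤ), y) : Vtx) - (1, 0)) = (((j : ℤ) - 1, y) : Vtx) := by
        simp [Prod.ext_iff]
      have e3 : ((((j : ℤ), y) : Vtx) + (0, 1)) = (((j : ℤ), y + 1) : Vtx) := by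
        simp [Prod.ext_iff]
      have e4 : ((((j : ℤ), y) : Vtx) - (0, 1)) = (((j : ℤ), y - 1) : Vtx) := by
        simp [Prod.ext_iff]
      rw [e1, e2, e3, e4] at heq
      have hzc : u ((j : ℤ), y) = 0 := ih j (by omega) (by omega) y hy0 hyN
      have hzl : u ((j : ℤ) - 1, y) = 0 := by
        rcases Nat.eq_zero_or_pos j with hj | hj
        · subst hj; simpa using hL y hy0 hyN
        · obtain ⟨i, rfl⟩ : ∃ i, j = i + 1 := ⟨j - 1, by omega⟩
          have hcast : ((i + 1 : ℕ) : ℤ) - 1 = (i : ℤ) := by push_cast; ring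
          rw [hcast]
          exact ih i (by omega) (by omega) y hy0 hyN
      have hzu : u ((j : ℤ), y + 1) = 0 := by
        by_cases hy : y + 1 ≤ (N : ℤ)
        · exact ih j (by omega) (by omega) (y + 1) (by omega) hy
        · have hyeq : y = (N : ℤ) := by omega
          rw [hyeq]
          exact hT (j : ℤ) hj0 hjN
      have hzd : u ((j : ℤ), y - 1) = 0 := by
        by_cases hy : 0 ≤ y - 1
        · exact ih j (by omega) (by omega) (y - 1) hy (by omega)
        · have hyeq : y = 0 := by omega
          rw [hyeq]
          have := hB (j : ℤ) hj0 hjN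
          norm_num
          simpa using this
      rw [hzc, hzl, hzu, hzd] at heq
      have h4 : c ((j : ℤ), y) ((j : ℤ) + 1, y) * u ((j : ℤ) + 1, y) = 0 := by
        linear_combination 4 * heq
      have hcz : c ((j : ℤ), y) ((j : ℤ) + 1, y) ≠ 0 := by
        refine hc.2 _ _ (Or.inl hv) ?_ (adjacent_horiz _ _) (Or.inl hv)
        by_cases hj : (j : ℤ) + 1 ≤ (N : ℤ)
        · exact Or.inl (mem_int N (by omega) hj hy0 hyN)
        · have hje : (j : ℤ) + 1 = (N : ℤ) + 1 := by omega
          rw [hje]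
          exact Or.inr (right_mem_bdry N hy0 hyN)
      have hz : u ((j : ℤ) + 1, y) = 0 := (mul_eq_zero.mp h4).resolve_left hcz
      have hcast : ((j + 1 : ℕ) : ℤ) = (j : ℤ) + 1 := by push_cast; ring
      rw [hcast]
      exact hz

open scoped Classical in
/-- assuming unique solvability of the Dirichlet problem (encoded by the
solution operator `sol`), the submatrix `Λ_V((∂Ω)_L ; (∂Ω)_R)` of the vertex
Dirichlet-to-Neumann map — i.e. the linear map sending `h₀ : (∂Ω)_R → ℂ` to the
restriction to `(∂Ω)_L` of `Λ_V h`, `h` the extension of `h₀` by zero — is a bijection. -/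
theorem DN_submatrix_bijective (N : ℕ) (hN : 1 ≤ N)
    (c : Vtx → Vtx → ℂ) (m : Vtx → ℂ) (hc : WeightsOK N c)
    (sol : (Vtx → ℂ) → (Vtx → ℂ))
    (hsol : ∀ h, DiscreteSchrodinger N c m (sol h) ∧ Set.EqOn (sol h) h (bdrySq N))
    (huniq : ∀ h u, DiscreteSchrodinger N c m u → Set.EqOn u h (bdrySq N) →
      Set.EqOn u (sol h) (omegaSq N)) :
    Function.Bijective
      (fun h₀ : {v : Vtx // v ∈ bdryR N} → ℂ =>
        fun v : {v : Vtx // v ∈ bdryL N} =>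
          -sol (fun x => if hx : x ∈ bdryR N then h₀ ⟨x, hx⟩ else 0) (intNbr N v.1)) := by
  -- the interior neighbor of a left-boundary vertex
  have hnbr : ∀ v : {v : Vtx // v ∈ bdryL N}, intNbr N v.1 = ((0 : ℤ), v.1.2) := by
    intro v
    have h1 : v.1.1 = -1 := v.2.1
    simp only [intNbr, h1, if_pos rfl]
    norm_num
  have hnbr_mem : ∀ v : {v : Vtx // v ∈ bdryL N}, intNbr N v.1 ∈ omegaSq N := by
    intro v
    rw [hnbr v]
    exact Or.inl (mem_int N le_rfl (by positivity) v.2.2.1 v.2.2.2)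
  -- additivity of sol on extended data
  have hadd : ∀ a b : {v : Vtx // v ∈ bdryR N} → ℂ, ∀ p ∈ omegaSq N,
      sol (extR N (a + b)) p = sol (extR N a) p + sol (extR N b) p := by
    intro a b p hp
    have hds : DiscreteSchrodinger N c m (sol (extR N a) + sol (extR N b)) := by
      intro w hw
      have e1 := (hsol (extR N a)).1 w hw
      have e2 := (hsol (extR N b)).1 w hw
      simp only [Pi.add_apply]
      linear_combination e1 + e2
    have hbd : Set.EqOn (sol (extR N a) + sol (extR N b)) (extR N (a + b)) (bdrySq N) := by
      intro w hw
      simp only [Pi.add_apply, extR_add]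
      rw [(hsol (extR N a)).2 hw, (hsol (extR N b)).2 hw]
    exact ((huniq (extR N (a + b)) _ hds hbd) hp).symm
  -- homogeneity of sol on extended data
  have hsmul : ∀ (s : ℂ) (a : {v : Vtx // v ∈ bdryR N} → ℂ), ∀ p ∈ omegaSq N,
      sol (extR N (s • a)) p = s * sol (extR N a) p := by
    intro s a p hp
    have hds : DiscreteSchrodinger N c m (s • sol (extR N a)) := by
      intro w hw
      have e1 := (hsol (extR N a)).1 w hw
      simp only [Pi.smul_apply, smul_eq_mul]
      linear_combination s * e1
    have hbd : Set.EqOn (s • sol (extR N a)) (extR N (s • a)) (bdrySq N) := by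
      intro w hw
      simp only [Pi.smul_apply, smul_eq_mul, extR_smul]
      rw [(hsol (extR N a)).2 hw]
    exact ((huniq (extR N (s • a)) _ hds hbd) hp).symm
  -- package the map as a linear map
  let T : ({v : Vtx // v ∈ bdryR N} → ℂ) →ₗ[ℂ] ({v : Vtx // v ∈ bdryL N} → ℂ) :=
    { toFun := fun h₀ : {v : Vtx // v ∈ bdryR N} → ℂ =>
        fun v : {v : Vtx // v ∈ bdryL N} =>
          -sol (fun x => if hx : x ∈ bdryR N then h₀ ⟨x, hx⟩ else 0) (intNbr N v.1)
      map_add' := by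
        intro a b
        funext v
        have := hadd a b _ (hnbr_mem v)
        show -sol (extR N (a + b)) (intNbr N v.1) = _
        rw [this]
        show _ = -sol (extR N a) (intNbr N v.1) + -sol (extR N b) (intNbr N v.1)
        ring
      map_smul' := by
        intro s a
        funext v
        have := hsmul s a _ (hnbr_mem v)
        show -sol (extR N (s • a)) (intNbr N v.1) = _
        rw [this]
        show _ = s * -sol (extR N a) (intNbr N v.1)
        ring }
  have hinj : Function.Injective T := by
    rw [injective_iff_map_eq_zero]
    intro a ha
    set u := sol (extR N a) with hudef
    have hbd := (hsol (extR N a)).2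
    have hL : ∀ y : ℤ, 0 ≤ y → y ≤ N → u (-1, y) = 0 := by
      intro y h3 h4
      rw [hudef, hbd (left_mem_bdry N h3 h4)]
      exact extR_not_mem N a (left_not_R N y)
    have hT : ∀ x : ℤ, 0 ≤ x → x ≤ N → u (x, (N : ℤ) + 1) = 0 := by
      intro x h1 h2
      rw [hudef, hbd (top_mem_bdry N h1 h2)]
      exact extR_not_mem N a (top_not_R N x)
    have hB : ∀ x : ℤ, 0 ≤ x → x ≤ N → u (x, -1) = 0 := by
      intro x h1 h2
      rw [hudef, hbd (bot_mem_bdry N h1 h2)]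
      exact extR_not_mem N a (bot_not_R N x)
    have h0 : ∀ y : ℤ, 0 ≤ y → y ≤ N → u (0, y) = 0 := by
      intro y h3 h4
      have hv : ((-1, y) : Vtx) ∈ bdryL N := ⟨rfl, h3, h4⟩
      have h2 : -u (intNbr N ((-1, y) : Vtx)) = 0 := congrFun ha ⟨(-1, y), hv⟩
      have hn : intNbr N ((-1, y) : Vtx) = ((0 : ℤ), y) := hnbr ⟨(-1, y), hv⟩
      rw [hn] at h2
      simpa using h2
    have hvan := key_vanish N c m hc u (hsol (extR N a)).1 hL hT hB h0
    funext v
    obtain ⟨p, hp⟩ := v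
    have hp1 : p = (((N : ℤ) + 1, p.2) : Vtx) := Prod.ext hp.1 rfl
    have hz : u (((N : ℤ) + 1, p.2) : Vtx) = 0 := by
      have hcast : ((N + 1 : ℕ) : ℤ) = (N : ℤ) + 1 := by push_cast; ring
      have := hvan (N + 1) le_rfl p.2 hp.2.1 hp.2.2
      rwa [hcast] at this
    have hmem : p ∈ bdrySq N := by rw [hp1]; exact right_mem_bdry N hp.2.1 hp.2.2
    have : extR N a p = 0 := by
      rw [← hbd hmem, hp1]
      exact hz
    rw [extR_mem N a hp] at this
    simpa using this
  have hrank : Module.finrank ℂ ({v : Vtx // v ∈ bdryR N} → ℂ)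
      = Module.finrank ℂ ({v : Vtx // v ∈ bdryL N} → ℂ) := by
    rw [Module.finrank_fintype_fun_eq_card, Module.finrank_fintype_fun_eq_card]
    exact Fintype.card_congr ((bdryREquiv N).trans (bdryLEquiv N).symm)
  exact ⟨hinj, (LinearMap.injective_iff_surjective_of_finrank_eq_finrank hrank).1 hinj⟩
end

section
/- For every f₁ : (∂Ω \ (∂Ω)_R) → ℂ and every g : (∂Ω)_L → ℂ, there exists a unique f : ∂Ω → ℂ such that f = f₁ on ∂Ω \ (∂Ω)_R and (Λ_V f)(v) = g(v) for every v ∈ (∂Ω)_L. (Lemma 4.1, part (2).) -/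
open Set

/-!
The Schrödinger equation at an interior vertex `v` can be solved for `u (v + (1,0))`, because the
weight of the edge from `v` to its east neighbour is nonzero. Dirichlet data on the left column
and Neumann data on the left side fix `u` on the first two columns (`x = -1, 0`), the equations at
column `x` then determine column `x + 1` inside the strip `0 ≤ y ≤ N`, and the remaining vertices
of `Ω` carry Dirichlet data. Marching to the right therefore produces exactly one solution `u` with
the partial data, and `f := u` on `∂Ω` is the unique boundary function sought, by unique
solvability of the Dirichlet problem.
-/

lemma adjacent_iff (v w : Vtx) : adjacent v w ↔
    (v.1 = w.1 ∧ (v.2 = w.2 + 1 ∨ v.2 = w.2 - 1)) ∨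
    (v.2 = w.2 ∧ (v.1 = w.1 + 1 ∨ v.1 = w.1 - 1)) := by
  unfold adjacent
  rcases abs_cases (v.1 - w.1) with ⟨h1, _⟩ | ⟨h1, _⟩ <;>
    rcases abs_cases (v.2 - w.2) with ⟨h2, _⟩ | ⟨h2, _⟩ <;> rw [h1, h2] <;> omega

lemma mem_bdrySq_iff {N : ℕ} {v : Vtx} : v ∈ bdrySq N ↔
    (v.1 = -1 ∧ 0 ≤ v.2 ∧ v.2 ≤ N) ∨ (v.1 = N + 1 ∧ 0 ≤ v.2 ∧ v.2 ≤ N) ∨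
    (v.2 = -1 ∧ 0 ≤ v.1 ∧ v.1 ≤ N) ∨ (v.2 = N + 1 ∧ 0 ≤ v.1 ∧ v.1 ≤ N) := by
  simp only [bdrySq, interiorSq, adjacent_iff, Set.mem_ofPred_eq]
  constructor
  · rintro ⟨hv, w, hw, hadj⟩
    omega
  · intro h
    refine ⟨by omega, ?_⟩
    rcases h with h | h | h | h
    · exact ⟨(v.1 + 1, v.2), by dsimp only; omega⟩
    · exact ⟨(v.1 - 1, v.2), by dsimp only; omega⟩
    · exact ⟨(v.1, v.2 + 1), by dsimp only; omega⟩
    · exact ⟨(v.1, v.2 - 1), by dsimp only; omega⟩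

lemma mem_omegaSq_iff {N : ℕ} {v : Vtx} : v ∈ omegaSq N ↔
    -1 ≤ v.1 ∧ v.1 ≤ N + 1 ∧ -1 ≤ v.2 ∧ v.2 ≤ N + 1 ∧
      ((0 ≤ v.1 ∧ v.1 ≤ N) ∨ (0 ≤ v.2 ∧ v.2 ≤ N)) := by
  rw [omegaSq, Set.mem_union, mem_bdrySq_iff]
  simp only [interiorSq, Set.mem_ofPred_eq]
  omega

lemma mem_bdrySq_diff_bdryR_iff {N : ℕ} {v : Vtx} : v ∈ bdrySq N \ bdryR N ↔
    v ∈ omegaSq N ∧ (v.1 = -1 ∨ ¬(0 ≤ v.2 ∧ v.2 ≤ N)) := by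
  simp only [Set.mem_sdiff, mem_bdrySq_iff, mem_omegaSq_iff, bdryR, Set.mem_ofPred_eq]
  omega

lemma mem_omegaSq_cases {N : ℕ} {v : Vtx} (hv : v ∈ omegaSq N) :
    v ∈ bdrySq N \ bdryR N ∨ v - (1, 0) ∈ bdryL N ∨ v - (1, 0) ∈ interiorSq N := by
  rw [mem_bdrySq_diff_bdryR_iff]
  have := mem_omegaSq_iff.mp hv
  simp only [hv, true_and, bdryL, interiorSq, Set.mem_ofPred_eq, Prod.fst_sub, Prod.snd_sub]
  omega

lemma intNbr_of_mem_bdryL {N : ℕ} {v : Vtx} (hv : v ∈ bdryL N) : intNbr N v = v + (1, 0) := by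
  obtain ⟨h1, -⟩ := hv
  simp [intNbr, h1, Prod.ext_iff]

lemma bdryL_subset_bdrySq {N : ℕ} : bdryL N ⊆ bdrySq N := fun _ hv =>
  mem_bdrySq_iff.mpr (Or.inl hv)

lemma intNbr_mem_interiorSq {N : ℕ} {v : Vtx} (hv : v ∈ bdrySq N) : intNbr N v ∈ interiorSq N := by
  rw [mem_bdrySq_iff] at hv
  unfold intNbr
  split_ifs <;> simp only [interiorSq, Set.mem_ofPred_eq] <;> omega

lemma WeightsOK.east_ne_zero {N : ℕ} {c : Vtx → Vtx → ℂ} (hc : WeightsOK N c) {v : Vtx}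
    (hv : v ∈ interiorSq N) : c v (v + (1, 0)) ≠ 0 := by
  obtain ⟨h0, hN, h0', hN'⟩ := hv
  refine hc.2 _ _ ?_ ?_ ?_ (Or.inl ⟨h0, hN, h0', hN'⟩) <;>
    simp only [mem_omegaSq_iff, adjacent_iff, Prod.fst_add, Prod.snd_add] <;> omega

noncomputable def forcedEastValue (c : Vtx → Vtx → ℂ) (m : Vtx → ℂ) (v : Vtx) (uv uW uN uS : ℂ) :
    ℂ :=
  (4 * m v * uv - c v (v - (1, 0)) * uW - c v (v + (0, 1)) * uN - c v (v - (0, 1)) * uS)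
    / c v (v + (1, 0))

lemma schrodinger_iff_eq_forcedEastValue {c : Vtx → Vtx → ℂ} {m u : Vtx → ℂ} {v : Vtx}
    (hv : c v (v + (1, 0)) ≠ 0) :
    (1 / 4 : ℂ) * (c v (v + (1, 0)) * u (v + (1, 0)) + c v (v - (1, 0)) * u (v - (1, 0))
        + c v (v + (0, 1)) * u (v + (0, 1)) + c v (v - (0, 1)) * u (v - (0, 1))) = m v * u v ↔
      u (v + (1, 0)) =
        forcedEastValue c m v (u v) (u (v - (1, 0))) (u (v + (0, 1))) (u (v - (0, 1))) := by
  rw [forcedEastValue, eq_div_iff hv]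
  constructor
  · intro h
    linear_combination 4 * h
  · intro h
    linear_combination h / 4

def IsPartialDataSolution (N : ℕ) (c : Vtx → Vtx → ℂ) (m f₁ g u : Vtx → ℂ) : Prop :=
  DiscreteSchrodinger N c m u ∧ (∀ v ∈ bdrySq N \ bdryR N, u v = f₁ v) ∧
    ∀ v ∈ bdryL N, -u (intNbr N v) = g v

section March

variable (N : ℕ) (c : Vtx → Vtx → ℂ) (m f₁ g : Vtx → ℂ)

/-- `marchCol N c m f₁ g k` is the column `x = k - 1` (indexed by `ℕ` so that the recursion is
structural). -/
noncomputable def marchCol : ℕ → ℤ → ℂ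
  | 0, y => f₁ (-1, y)
  | 1, y => if 0 ≤ y ∧ y ≤ N then -g (-1, y) else f₁ (0, y)
  | k + 2, y =>
      if 0 ≤ y ∧ y ≤ N then
        forcedEastValue c m (k, y) (marchCol (k + 1) y) (marchCol k y)
          (marchCol (k + 1) (y + 1)) (marchCol (k + 1) (y - 1))
      else f₁ (k + 1, y)

noncomputable def marchSol (v : Vtx) : ℂ := marchCol N c m f₁ g (v.1 + 1).toNat v.2

variable {N c m f₁ g}

lemma marchCol_eq_marchSol (k : ℕ) (y : ℤ) :
    marchCol N c m f₁ g k y = marchSol N c m f₁ g (k - 1, y) := by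
  simp [marchSol]

lemma marchSol_eq_of_mem_bdrySq_diff_bdryR {v : Vtx} (hv : v ∈ bdrySq N \ bdryR N) :
    marchSol N c m f₁ g v = f₁ v := by
  obtain ⟨x, y⟩ := v
  obtain ⟨hΩ, hxy⟩ := mem_bdrySq_diff_bdryR_iff.mp hv
  have := mem_omegaSq_iff.mp hΩ
  dsimp only at this hxy
  obtain ⟨k, rfl⟩ : ∃ k : ℕ, x = k - 1 := ⟨(x + 1).toNat, by omega⟩
  rw [← marchCol_eq_marchSol]
  rcases k with _ | _ | k
  · simp [marchCol]
  · simp only [marchCol]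
    rw [if_neg (by omega)]
    simp
  · simp only [marchCol]
    rw [if_neg (by omega)]
    push_cast
    ring_nf

lemma marchSol_eq_of_mem_bdryL {v : Vtx} (hv : v ∈ bdryL N) :
    marchSol N c m f₁ g (v + (1, 0)) = -g v := by
  obtain ⟨x, y⟩ := v
  obtain ⟨rfl, hy⟩ := hv
  have h : ((-1 : ℤ), y) + (1, 0) = (((1 : ℕ) : ℤ) - 1, y) := by simp
  rw [h, ← marchCol_eq_marchSol, marchCol, if_pos hy]

lemma marchSol_east {v : Vtx} (hv : v ∈ interiorSq N) :
    marchSol N c m f₁ g (v + (1, 0)) = forcedEastValue c m v (marchSol N c m f₁ g v)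
      (marchSol N c m f₁ g (v - (1, 0))) (marchSol N c m f₁ g (v + (0, 1)))
      (marchSol N c m f₁ g (v - (0, 1))) := by
  obtain ⟨x, y⟩ := v
  obtain ⟨hx, -, hy⟩ := hv
  obtain ⟨k, rfl⟩ : ∃ k : ℕ, x = k := ⟨x.toNat, by omega⟩
  have h : ((k : ℤ), y) + (1, 0) = (((k + 2 : ℕ) : ℤ) - 1, y) := by
    simp only [Prod.mk_add_mk, add_zero, Prod.mk.injEq, and_true]; push_cast; ring
  rw [h, ← marchCol_eq_marchSol, marchCol, if_pos hy]
  simp only [marchCol_eq_marchSol]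
  congr 2 <;> simp

lemma marchSol_isPartialDataSolution (hc : WeightsOK N c) :
    IsPartialDataSolution N c m f₁ g (marchSol N c m f₁ g) := by
  refine ⟨fun v hv => ?_, fun v hv => marchSol_eq_of_mem_bdrySq_diff_bdryR hv, fun v hv => ?_⟩
  · exact (schrodinger_iff_eq_forcedEastValue (hc.east_ne_zero hv)).mpr (marchSol_east hv)
  · rw [intNbr_of_mem_bdryL hv, marchSol_eq_of_mem_bdryL hv, neg_neg]

lemma IsPartialDataSolution.eqOn_marchSol (hc : WeightsOK N c) {u : Vtx → ℂ}
    (hu : IsPartialDataSolution N c m f₁ g u) : EqOn u (marchSol N c m f₁ g) (omegaSq N) := by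
  obtain ⟨hS, hD, hNeu⟩ := hu
  intro v hv
  induction hk : (v.1 + 1).toNat using Nat.strong_induction_on generalizing v with
  | _ k ih =>
  rcases mem_omegaSq_cases hv with hb | hL | hI
  · rw [hD v hb, marchSol_eq_of_mem_bdrySq_diff_bdryR hb]
  · have := hNeu _ hL
    rw [intNbr_of_mem_bdryL hL, sub_add_cancel] at this
    rw [← sub_add_cancel v (1, 0), marchSol_eq_of_mem_bdryL hL, sub_add_cancel, ← this, neg_neg]
  · obtain ⟨w, rfl⟩ : ∃ w, v = w + (1, 0) := ⟨v - (1, 0), (sub_add_cancel v _).symm⟩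
    rw [add_sub_cancel_right] at hI
    have ⟨hx0, hxN, hy0, hyN⟩ := hI
    rw [(schrodinger_iff_eq_forcedEastValue (hc.east_ne_zero hI)).mp (hS w hI), marchSol_east hI]
    congr 1 <;> refine ih _ ?_ ?_ rfl <;>
      simp only [mem_omegaSq_iff, Prod.fst_add, Prod.fst_sub, Prod.snd_add, Prod.snd_sub]
        at hk ⊢ <;>
      omega

end March

theorem partial_data_boundary_extension_general (N : ℕ)
    (c : Vtx → Vtx → ℂ) (m : Vtx → ℂ) (hc : WeightsOK N c)
    (sol : (Vtx → ℂ) → (Vtx → ℂ))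
    (hsol : ∀ h, DiscreteSchrodinger N c m (sol h) ∧ Set.EqOn (sol h) h (bdrySq N))
    (huniq : ∀ h u, DiscreteSchrodinger N c m u → Set.EqOn u h (bdrySq N) →
      Set.EqOn u (sol h) (omegaSq N))
    (f₁ g : Vtx → ℂ) :
    ∃ f : Vtx → ℂ,
      ((∀ v ∈ bdrySq N \ bdryR N, f v = f₁ v) ∧
        ∀ v ∈ bdryL N, -sol f (intNbr N v) = g v) ∧
      ∀ f' : Vtx → ℂ,
        ((∀ v ∈ bdrySq N \ bdryR N, f' v = f₁ v) ∧
          ∀ v ∈ bdryL N, -sol f' (intNbr N v) = g v) →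
        Set.EqOn f' f (bdrySq N) := by
  set u := marchSol N c m f₁ g
  obtain ⟨hSu, hDu, hNu⟩ : IsPartialDataSolution N c m f₁ g u := marchSol_isPartialDataSolution hc
  have hsol_u : EqOn u (sol u) (omegaSq N) := huniq u u hSu (eqOn_refl _ _)
  refine ⟨u, ⟨hDu, fun v hv => ?_⟩, fun f' ⟨hDf', hNf'⟩ v hv => ?_⟩
  · have hw : intNbr N v ∈ omegaSq N := Or.inl (intNbr_mem_interiorSq (bdryL_subset_bdrySq hv))
    rw [← hsol_u hw, hNu v hv]
  · have hsol_f' : IsPartialDataSolution N c m f₁ g (sol f') :=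
      ⟨(hsol f').1, fun w hw => ((hsol f').2 hw.1).trans (hDf' w hw), hNf'⟩
    calc f' v = sol f' v := ((hsol f').2 hv).symm
      _ = u v := hsol_f'.eqOn_marchSol hc (Or.inr hv)

/-- Lemma 4.1(2): given the vertex D-N map `Λ_V` (encoded by the Dirichlet
solution operator `sol`, with `(Λ_V f)(v) = −(sol f)(w(v))`), partial Dirichlet data `f₁`
on `∂Ω \ (∂Ω)_R` and partial Neumann data `g` on `(∂Ω)_L`, there is a unique `f` on `∂Ω`
with `f = f₁` on `∂Ω \ (∂Ω)_R` and `Λ_V f = g` on `(∂Ω)_L`. -/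
theorem partial_data_boundary_extension (N : ℕ) (hN : 1 ≤ N)
    (c : Vtx → Vtx → ℂ) (m : Vtx → ℂ) (hc : WeightsOK N c)
    (sol : (Vtx → ℂ) → (Vtx → ℂ))
    (hsol : ∀ h, DiscreteSchrodinger N c m (sol h) ∧ Set.EqOn (sol h) h (bdrySq N))
    (huniq : ∀ h u, DiscreteSchrodinger N c m u → Set.EqOn u h (bdrySq N) →
      Set.EqOn u (sol h) (omegaSq N))
    (f₁ g : Vtx → ℂ) :
    ∃ f : Vtx → ℂ,
      ((∀ v ∈ bdrySq N \ bdryR N, f v = f₁ v) ∧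
        ∀ v ∈ bdryL N, -sol f (intNbr N v) = g v) ∧
      ∀ f' : Vtx → ℂ,
        ((∀ v ∈ bdrySq N \ bdryR N, f' v = f₁ v) ∧
          ∀ v ∈ bdryL N, -sol f' (intNbr N v) = g v) →
        Set.EqOn f' f (bdrySq N) :=
  partial_data_boundary_extension_general N c m hc sol hsol huniq f₁ g
end
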